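/- For n ≥ 3, the transvection subgroup of Aut(C(B_n)), i.e., the subgroup consisting of all transvections of the Artin group C(B_n), is infinite cyclic. -/

import Mathlib

/-! Write `δ = s_1 s_2 ⋯ s_n`, so `z = δ ^ n`. Conjugation by `δ` shifts `s_i` to `s_{i+1}` for
`2 ≤ i < n`, and `δ ^ 2` carries `s_n` back to `s_2`; hence `δ ^ n` commutes with `s_2, …, s_n`, and
also with `s_1 = δ (s_2 ⋯ s_n)⁻¹`, so `z` is central.

The braid relations force a homomorphism `t : C(B_n) → ℤ` to take one value `B` on `s_2, …, s_n`;
with `A = t(s_1)` this gives `t(z) = n (A + (n - 1) B)`. If `x ↦ x z^{t(x)}` is onto, then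
`1 + t(z)` divides `t(z)`, so it is a unit and `t(z) ∈ {0, -2}`. For `n ≥ 3` only `t(z) = 0` is
possible, i.e. `t = B ν` with `ν(s_1) = 1 - n` and `ν(s_i) = 1` otherwise. Conversely
`k ↦ (x ↦ x z^{k ν(x)})` is a homomorphism `ℤ → Aut(C(B_n))` because `ν(z) = 0`, and it is injective
because `z` has infinite order. -/

/-- The defining relations of the Artin group of type `B_n`, on generators `s_1, …, s_n`
(indexed by `Fin n`, so `s_{i+1}` corresponds to the index `i`):
`s_1 s_2 s_1 s_2 = s_2 s_1 s_2 s_1`, the braid relation `s_i s_{i+1} s_i = s_{i+1} s_i s_{i+1}`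
for `2 ≤ i ≤ n-1`, and the commutation `s_i s_j = s_j s_i` for `|i - j| ≥ 2`. -/
def typeBRels (n : ℕ) : Set (FreeGroup (Fin n)) :=
  {r | (∃ i j : Fin n, (i : ℕ) = 0 ∧ (j : ℕ) = 1 ∧
          r = (.of i * .of j) ^ 2 * ((.of j * .of i) ^ 2)⁻¹) ∨
       (∃ i j : Fin n, 1 ≤ (i : ℕ) ∧ (i : ℕ) + 1 = (j : ℕ) ∧
          r = .of i * .of j * .of i * (.of j * .of i * .of j)⁻¹) ∨
       (∃ i j : Fin n, (i : ℕ) + 2 ≤ (j : ℕ) ∧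
          r = .of i * .of j * (.of j * .of i)⁻¹)}

/-- The Artin group of type `B_n`. -/
abbrev ArtinB (n : ℕ) : Type := PresentedGroup (typeBRels n)

/-- The standard generator `s_{i+1}` of the Artin group of type `B_n`. -/
def artinBGen {n : ℕ} (i : Fin n) : ArtinB n := PresentedGroup.of i

/-- The element `z = (s_1 s_2 ⋯ s_n)^n`, which generates the center of the Artin group of
type `B_n`. -/
def artinBTwist (n : ℕ) : ArtinB n :=
  ((List.ofFn fun i : Fin n => artinBGen i).prod) ^ n

/-- An automorphism of a group `G` is a transvection (with respect to the central element
`z`) if it has the form `x ↦ x * z ^ t x` for some homomorphism `t : G → ℤ`. -/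
def IsTransvection {G : Type*} [Group G] (z : G) (φ : MulAut G) : Prop :=
  ∃ t : G → ℤ, (∀ x y : G, t (x * y) = t x + t y) ∧ ∀ x : G, φ x = x * z ^ t x

section Transvection

variable {G : Type*} [Group G] {z : G}

theorem isTransvection_iff_exists_monoidHom {φ : MulAut G} :
    IsTransvection z φ ↔ ∃ t : G →* Multiplicative ℤ, ∀ x, φ x = x * z ^ (t x).toAdd := by
  constructor
  · rintro ⟨t, ht, hφ⟩
    exact ⟨MonoidHom.mk' (fun x => .ofAdd (t x)) fun x y => by simp [ht], hφ⟩
  · rintro ⟨t, hφ⟩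
    exact ⟨fun x => (t x).toAdd, fun x y => by simp, hφ⟩

theorem toAdd_map_eq_zero_or_eq_neg_two {t : G →* Multiplicative ℤ}
    (ht : Function.Surjective fun x => x * z ^ (t x).toAdd) :
    (t z).toAdd = 0 ∨ (t z).toAdd = -2 := by
  obtain ⟨x, hx⟩ := ht z
  have hdvd : 1 + (t z).toAdd ∣ (t z).toAdd := by
    refine ⟨(t x).toAdd, ?_⟩
    have h := congrArg (fun y => (t y).toAdd) hx
    simp only [map_mul, map_zpow, toAdd_mul, toAdd_zpow, smul_eq_mul] at h
    linear_combination -h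
  have hunit : 1 + (t z).toAdd ∣ 1 := by simpa using dvd_sub dvd_rfl hdvd
  rcases Int.isUnit_iff.mp (isUnit_of_dvd_one hunit) with h | h <;> omega

def transvection (hz : z ∈ Subgroup.center G) (t : G →* Multiplicative ℤ) : G →* G where
  toFun x := x * z ^ (t x).toAdd
  map_one' := by simp
  map_mul' x y := by
    have hc : Commute (z ^ (t x).toAdd) y :=
      (Subgroup.mem_center_iff.mp (Subgroup.zpow_mem _ hz _) y).symm
    simp only [map_mul, toAdd_mul, zpow_add, mul_assoc, hc.left_comm]

theorem transvection_apply (hz : z ∈ Subgroup.center G) (t : G →* Multiplicative ℤ) (x : G) :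
    transvection hz t x = x * z ^ (t x).toAdd := rfl

theorem transvection_one (hz : z ∈ Subgroup.center G) : transvection hz 1 = MonoidHom.id G := by
  ext x
  simp [transvection_apply]

theorem transvection_comp_transvection (hz : z ∈ Subgroup.center G) {s : G →* Multiplicative ℤ}
    (hs : s z = 1) (t : G →* Multiplicative ℤ) :
    (transvection hz s).comp (transvection hz t) = transvection hz (s * t) := by
  ext x
  simp [transvection_apply, hs, mul_assoc, ← zpow_add, add_comm]

def transvectionZPowHom (hz : z ∈ Subgroup.center G) (ν : G →* Multiplicative ℤ) (hν : ν z = 1) :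
    Multiplicative ℤ →* MulAut G where
  toFun k := MonoidHom.toMulEquiv (transvection hz (ν ^ k.toAdd)) (transvection hz (ν ^ (-k.toAdd)))
    (by rw [transvection_comp_transvection _ (by simp [hν]), ← zpow_add, neg_add_cancel, zpow_zero,
      transvection_one])
    (by rw [transvection_comp_transvection _ (by simp [hν]), ← zpow_add, add_neg_cancel, zpow_zero,
      transvection_one])
  map_one' := by ext; simp [transvection_apply]
  map_mul' k l := by
    ext x
    change transvection hz _ x = transvection hz _ (transvection hz _ x)
    rw [← MonoidHom.comp_apply, transvection_comp_transvection _ (by simp [hν]), ← zpow_add,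
      toAdd_mul]

theorem transvectionZPowHom_apply (hz : z ∈ Subgroup.center G) (ν : G →* Multiplicative ℤ)
    (hν : ν z = 1) (k : Multiplicative ℤ) (x : G) :
    transvectionZPowHom hz ν hν k x = x * z ^ (k.toAdd * (ν x).toAdd) := by
  simp [transvectionZPowHom, transvection_apply]

theorem isTransvection_transvectionZPowHom (hz : z ∈ Subgroup.center G)
    (ν : G →* Multiplicative ℤ) (hν : ν z = 1) (k : Multiplicative ℤ) :
    IsTransvection z (transvectionZPowHom hz ν hν k) :=
  isTransvection_iff_exists_monoidHom.mpr ⟨ν ^ k.toAdd, fun x => by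
    simp [transvectionZPowHom_apply]⟩

theorem transvectionZPowHom_injective (hz : z ∈ Subgroup.center G) {ν : G →* Multiplicative ℤ}
    (hν : ν z = 1) (hord : ¬IsOfFinOrder z) {x : G} (hx : ν x = .ofAdd 1) :
    Function.Injective (transvectionZPowHom hz ν hν) := by
  rw [injective_iff_map_eq_one]
  intro k hk
  have h := DFunLike.congr_fun hk x
  rw [transvectionZPowHom_apply, hx, toAdd_ofAdd, mul_one, MulAut.one_apply, mul_eq_left] at h
  exact (injective_zpow_iff_not_isOfFinOrder.mpr hord) (h.trans (zpow_zero z).symm)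

end Transvection

namespace ArtinB

variable {n : ℕ}

/-- The generator `s_{i+1}` indexed by a natural number, with the junk value `1` for `i ≥ n`. -/
def gen (n i : ℕ) : ArtinB n := if h : i < n then artinBGen ⟨i, h⟩ else 1

/-- The product `s_{a+1} s_{a+2} ⋯ s_{a+k}` (in the 0-based indexing of `gen`). -/
def segment (n a k : ℕ) : ArtinB n := ((List.range' a k).map (gen n)).prod

local notation "σ" => gen n
local notation "δ" => segment n 0 n

theorem gen_val (i : Fin n) : σ i = artinBGen i := by
  simp [gen]

private theorem mk_of (i : Fin n) : PresentedGroup.mk (typeBRels n) (.of i) = artinBGen i := rfl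

theorem commute_gen_zero_mul_gen_one_mul_gen_zero (h : 1 < n) :
    Commute (σ 0 * σ 1 * σ 0) (σ 1) := by
  have e := PresentedGroup.mk_eq_mk_of_mul_inv_mem (rels := typeBRels n)
    (x := (.of ⟨0, by omega⟩ * .of ⟨1, h⟩) ^ 2) (y := (.of ⟨1, h⟩ * .of ⟨0, by omega⟩) ^ 2)
    (Or.inl ⟨_, _, rfl, rfl, rfl⟩)
  simp only [map_mul, mk_of, sq] at e
  simpa [Commute, SemiconjBy, gen, h, show 0 < n by omega, mul_assoc] using e

theorem gen_braid {i : ℕ} (h1 : 1 ≤ i) (h2 : i + 1 < n) :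
    σ i * σ (i + 1) * σ i = σ (i + 1) * σ i * σ (i + 1) := by
  have e := PresentedGroup.mk_eq_mk_of_mul_inv_mem (rels := typeBRels n)
    (x := .of ⟨i, by omega⟩ * .of ⟨i + 1, h2⟩ * .of ⟨i, by omega⟩)
    (y := .of ⟨i + 1, h2⟩ * .of ⟨i, by omega⟩ * .of ⟨i + 1, h2⟩)
    (Or.inr (Or.inl ⟨_, _, h1, rfl, rfl⟩))
  simp only [map_mul, mk_of] at e
  simpa [gen, h2, show i < n by omega] using e

theorem commute_gen_gen {i j : ℕ} (h : i + 2 ≤ j ∨ j + 2 ≤ i) : Commute (σ i) (σ j) := by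
  wlog hij : i + 2 ≤ j generalizing i j
  · exact (this h.symm (h.resolve_left hij)).symm
  by_cases hj : j < n
  · have e := PresentedGroup.mk_eq_mk_of_mul_inv_mem (rels := typeBRels n)
      (x := .of ⟨i, by omega⟩ * .of ⟨j, hj⟩) (y := .of ⟨j, hj⟩ * .of ⟨i, by omega⟩)
      (Or.inr (Or.inr ⟨_, _, hij, rfl⟩))
    simp only [map_mul, mk_of] at e
    simpa [Commute, SemiconjBy, gen, hj, show i < n by omega] using e
  · simp [gen, hj]

theorem segment_zero (a : ℕ) : segment n a 0 = 1 := rfl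

theorem segment_succ (a k : ℕ) : segment n a (k + 1) = σ a * segment n (a + 1) k := by
  simp [segment, List.range'_succ]

theorem segment_add (a k m : ℕ) : segment n a (k + m) = segment n a k * segment n (a + k) m := by
  simp [segment, ← List.range'_append_1]

theorem commute_segment {x : ArtinB n} {a k : ℕ} (h : ∀ j, a ≤ j → j < a + k → Commute x (σ j)) :
    Commute x (segment n a k) :=
  Commute.list_prod_right _ _ <| by
    simp only [List.mem_map, List.mem_range'_1]
    rintro _ ⟨j, ⟨h1, h2⟩, rfl⟩
    exact h j h1 h2

theorem segment_two (a : ℕ) : segment n a 2 = σ a * σ (a + 1) := by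
  simp [segment_succ, segment_zero]

theorem semiconjBy_coxeter_gen {i : ℕ} (h1 : 1 ≤ i) (h2 : i + 2 ≤ n) :
    SemiconjBy δ (σ i) (σ (i + 1)) := by
  have hδ : δ = segment n 0 i * segment n i 2 * segment n (i + 2) (n - (i + 2)) := by
    have h := segment_add (n := n) 0 (i + 2) (n - (i + 2))
    rwa [Nat.add_sub_cancel' h2, segment_add 0 i 2, zero_add, zero_add] at h
  have hbraid : SemiconjBy (segment n i 2) (σ i) (σ (i + 1)) := by
    rw [segment_two, SemiconjBy, ← mul_assoc]
    exact gen_braid h1 (by omega)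
  rw [hδ]
  have hlow : Commute (segment n 0 i) (σ (i + 1)) :=
    (commute_segment fun j _ hj => commute_gen_gen (by omega)).symm
  have hhigh : Commute (segment n (i + 2) (n - (i + 2))) (σ i) :=
    (commute_segment fun j hj _ => commute_gen_gen (by omega)).symm
  exact (SemiconjBy.mul_left hlow hbraid).mul_left hhigh

theorem semiconjBy_coxeter_pow {i k : ℕ} (hi : 1 ≤ i) (hk : i + k < n) :
    SemiconjBy (δ ^ k) (σ i) (σ (i + k)) := by
  induction k with
  | zero => simp
  | succ k ih =>
    rw [pow_succ']
    exact (semiconjBy_coxeter_gen (i := i + k) (by omega) (by omega)).mul_left (ih (by omega))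

theorem semiconjBy_segment_mul_segment {a k : ℕ} (ha : 1 ≤ a) (hk : a + k < n) :
    SemiconjBy (segment n (a + 1) k * segment n a (k + 1)) (σ (a + k)) (σ a) := by
  induction k generalizing a with
  | zero =>
    simp only [segment_succ, segment_zero, one_mul, mul_one, add_zero]
    exact Commute.refl _
  | succ k ih =>
    have hc : Commute (σ a) (segment n (a + 1 + 1) k) :=
      commute_segment fun j hj _ => commute_gen_gen (by omega)
    have hsplit : segment n (a + 1) (k + 1) * segment n a (k + 1 + 1) =
        σ (a + 1) * σ a * (segment n (a + 1 + 1) k * segment n (a + 1) (k + 1)) := by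
      simp only [segment_succ, mul_assoc, hc.left_comm]
    have hbraid : SemiconjBy (σ (a + 1) * σ a) (σ (a + 1)) (σ a) := by
      rw [SemiconjBy, ← mul_assoc]
      exact (gen_braid ha (by omega)).symm
    rw [hsplit, show a + (k + 1) = a + 1 + k by omega]
    exact hbraid.mul_left (ih (by omega) (by omega))

theorem coxeter_eq_gen_zero_mul_segment (h : 1 ≤ n) : δ = σ 0 * segment n 1 (n - 1) := by
  rw [← segment_succ]
  congr 1
  omega

theorem coxeter_sq (h : 2 ≤ n) :
    δ ^ 2 = σ 0 * σ 1 * σ 0 * (segment n 2 (n - 2) * segment n 1 (n - 1)) := by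
  have hY : segment n 1 (n - 1) = σ 1 * segment n 2 (n - 2) := by
    rw [← segment_succ]
    congr 1
    omega
  have hc : Commute (σ 0) (segment n 2 (n - 2)) :=
    commute_segment fun j hj _ => commute_gen_gen (by omega)
  rw [sq, coxeter_eq_gen_zero_mul_segment (by omega), hY]
  simp only [mul_assoc]
  rw [hc.symm.left_comm]

theorem semiconjBy_coxeter_sq (h : 2 ≤ n) : SemiconjBy (δ ^ 2) (σ (n - 1)) (σ 1) := by
  have hA := semiconjBy_segment_mul_segment (n := n) (a := 1) (k := n - 2) le_rfl (by omega)
  rw [show n - 2 + 1 = n - 1 by omega, show 1 + (n - 2) = n - 1 by omega] at hA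
  rw [coxeter_sq h]
  exact SemiconjBy.mul_left (commute_gen_zero_mul_gen_one_mul_gen_zero (by omega)) hA

theorem commute_coxeter_pow_gen_of_pos {i : ℕ} (h1 : 1 ≤ i) (h2 : i < n) :
    Commute (δ ^ n) (σ i) := by
  have hδ : δ ^ n = δ ^ (i - 1) * δ ^ 2 * δ ^ (n - 1 - i) := by
    rw [← pow_add, ← pow_add]
    congr 1
    omega
  have hup := semiconjBy_coxeter_pow (n := n) (i := 1) (k := i - 1) le_rfl (by omega)
  have hdown := semiconjBy_coxeter_pow (n := n) (i := i) (k := n - 1 - i) h1 (by omega)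
  rw [show 1 + (i - 1) = i by omega] at hup
  rw [show i + (n - 1 - i) = n - 1 by omega] at hdown
  rw [hδ]
  exact (hup.mul_left (semiconjBy_coxeter_sq (by omega))).mul_left hdown

theorem commute_coxeter_pow_gen (i : ℕ) : Commute (δ ^ n) (σ i) := by
  rcases Nat.eq_zero_or_pos i with rfl | hi
  · by_cases hn : n = 0
    · simp [gen, hn]
    · rw [eq_mul_inv_of_mul_eq (coxeter_eq_gen_zero_mul_segment (by omega)).symm]
      exact (Commute.pow_self δ n).mul_right (commute_segment fun j hj _ =>
        commute_coxeter_pow_gen_of_pos hj (by omega)).inv_right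
  · by_cases hin : i < n
    · exact commute_coxeter_pow_gen_of_pos hi hin
    · simp [gen, hin]

theorem twist_eq_coxeter_pow : artinBTwist n = δ ^ n := by
  rw [artinBTwist, segment, List.ofFn_eq_map, ← List.range_eq_range',
    ← List.map_coe_finRange_eq_range, List.map_map]
  congr 3
  ext i
  exact (gen_val i).symm

theorem twist_mem_center : artinBTwist n ∈ Subgroup.center (ArtinB n) := by
  rw [← SetLike.mem_coe, ← Set.singleton_subset_iff, ← Subgroup.centralizer_eq_top_iff_subset,
    eq_top_iff, ← PresentedGroup.closure_range_of, Subgroup.closure_le]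
  rintro _ ⟨i, rfl⟩
  rw [SetLike.mem_coe, Subgroup.mem_centralizer_singleton_iff, twist_eq_coxeter_pow]
  exact (gen_val i ▸ commute_coxeter_pow_gen i).symm.eq

section CommGroup

variable {M : Type*} [CommGroup M]

def toCommGroup (n : ℕ) (a b : M) : ArtinB n →* M :=
  PresentedGroup.toGroup (f := fun i : Fin n => if (i : ℕ) = 0 then a else b) <| by
    rintro r (⟨i, j, -, -, rfl⟩ | ⟨i, j, hi, hj, rfl⟩ | ⟨i, j, -, rfl⟩)
    all_goals simp only [map_mul, map_inv, map_pow, FreeGroup.lift_apply_of, mul_inv_eq_one]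
    · rw [mul_comm]
    · simp [show (i : ℕ) ≠ 0 by omega, show (j : ℕ) ≠ 0 by omega]
    · rw [mul_comm]

theorem toCommGroup_gen (a b : M) {i : ℕ} (hi : i < n) :
    toCommGroup n a b (σ i) = if i = 0 then a else b := by
  rw [show σ i = artinBGen ⟨i, hi⟩ from gen_val ⟨i, hi⟩]
  exact PresentedGroup.toGroup.of _

theorem map_gen_eq_map_gen_one (f : ArtinB n →* M) {i : ℕ} (h1 : 1 ≤ i) (h2 : i < n) :
    f (σ i) = f (σ 1) := by
  induction i, h1 using Nat.le_induction with
  | base => rfl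
  | succ i hi ih =>
    have h := congrArg f (gen_braid hi h2)
    simp only [map_mul] at h
    rw [mul_comm (f (σ (i + 1))) (f (σ i))] at h
    rw [← mul_left_cancel h, ih (by omega)]

theorem map_segment (f : ArtinB n →* M) {a k : ℕ} (ha : 1 ≤ a) (hk : a + k ≤ n) :
    f (segment n a k) = f (σ 1) ^ k := by
  induction k generalizing a with
  | zero => simp [segment_zero]
  | succ k ih =>
    rw [segment_succ, map_mul, map_gen_eq_map_gen_one f ha (by omega), ih (by omega) (by omega),
      pow_succ']

theorem map_twist (f : ArtinB n →* M) :
    f (artinBTwist n) = (f (σ 0) * f (σ 1) ^ (n - 1)) ^ n := by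
  rcases Nat.eq_zero_or_pos n with rfl | hn
  · simp [artinBTwist]
  rw [twist_eq_coxeter_pow, map_pow, coxeter_eq_gen_zero_mul_segment hn, map_mul,
    map_segment f le_rfl (by omega)]

theorem toCommGroup_twist (a b : M) :
    toCommGroup n a b (artinBTwist n) = (a * b ^ (n - 1)) ^ n := by
  rw [map_twist]
  rcases Nat.lt_or_ge n 2 with hn | hn
  · interval_cases n <;> simp [toCommGroup_gen]
  · rw [toCommGroup_gen _ _ (by omega), toCommGroup_gen _ _ hn]
    simp

theorem commGroup_hom_ext {f g : ArtinB n →* M} (h0 : f (σ 0) = g (σ 0)) (h1 : f (σ 1) = g (σ 1)) :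
    f = g := by
  refine PresentedGroup.ext fun i => ?_
  change f (artinBGen i) = g (artinBGen i)
  rw [← gen_val]
  rcases Nat.eq_zero_or_pos i with hi | hi
  · rwa [hi]
  · rw [map_gen_eq_map_gen_one f hi i.isLt, map_gen_eq_map_gen_one g hi i.isLt, h1]

end CommGroup

theorem twist_not_isOfFinOrder (hn : 1 ≤ n) : ¬IsOfFinOrder (artinBTwist n) := by
  intro h
  have h' := (toCommGroup n (Multiplicative.ofAdd (1 : ℤ)) 1).isOfFinOrder h
  rw [isOfFinOrder_iff_eq_one, toCommGroup_twist] at h'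
  have h'' := congrArg Multiplicative.toAdd h'
  simp at h''
  omega

def nu (n : ℕ) : ArtinB n →* Multiplicative ℤ :=
  toCommGroup n (.ofAdd (1 - n : ℤ)) (.ofAdd 1)

theorem nu_gen_one (hn : 2 ≤ n) : nu n (σ 1) = .ofAdd 1 := by
  simp [nu, toCommGroup_gen _ _ (show 1 < n by omega)]

theorem nu_twist : nu n (artinBTwist n) = 1 := by
  apply Multiplicative.toAdd.injective
  rcases Nat.eq_zero_or_pos n with rfl | hn
  · simp [nu, toCommGroup_twist]
  simp [nu, toCommGroup_twist, Nat.cast_sub hn]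

theorem exists_transvectionZPowHom_eq (hn : 3 ≤ n) {φ : MulAut (ArtinB n)}
    (hφ : IsTransvection (artinBTwist n) φ) :
    ∃ k, transvectionZPowHom twist_mem_center (nu n) nu_twist k = φ := by
  obtain ⟨t, ht⟩ := isTransvection_iff_exists_monoidHom.mp hφ
  set A := (t (σ 0)).toAdd
  set B := (t (σ 1)).toAdd
  have htz : n * (A + (n - 1) * B) = 0 ∨ n * (A + (n - 1) * B) = -2 := by
    have h := toAdd_map_eq_zero_or_eq_neg_two (funext ht ▸ φ.surjective)
    rwa [map_twist, toAdd_pow, toAdd_mul, toAdd_pow, nsmul_eq_mul, nsmul_eq_mul,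
      Nat.cast_sub (by omega), Nat.cast_one] at h
  have hA : A = B * (1 - n) := by
    have hn' : (3 : ℤ) ≤ n := by exact_mod_cast hn
    rcases htz with h | h
    · rcases mul_eq_zero.mp h with h | h <;> [omega; linarith]
    · rcases le_or_gt 0 (A + (n - 1) * B) with h' | h' <;> nlinarith
  have htν : t = nu n ^ B := by
    refine commGroup_hom_ext (Multiplicative.toAdd.injective ?_) (Multiplicative.toAdd.injective ?_)
    · simpa [nu, toCommGroup_gen _ _ (show 0 < n by omega)] using hA
    · simp [nu_gen_one (show 2 ≤ n by omega), B]
  refine ⟨.ofAdd B, MulEquiv.ext fun x => ?_⟩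
  rw [transvectionZPowHom_apply, ht, htν]
  simp

end ArtinB

/-- For `n ≥ 3`, the transvection subgroup of `Aut(C(B_n))` — the
subgroup of all transvections of the Artin group of type `B_n` — is infinite cyclic. -/
theorem artinB_transvection_subgroup_infinite_cyclic
    (n : ℕ) (hn : 3 ≤ n) :
    ∃ H : Subgroup (MulAut (ArtinB n)),
      (H : Set (MulAut (ArtinB n))) = {φ | IsTransvection (artinBTwist n) φ} ∧
      Nonempty (H ≃* Multiplicative ℤ) := by
  have hinj := transvectionZPowHom_injective ArtinB.twist_mem_center ArtinB.nu_twist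
    (ArtinB.twist_not_isOfFinOrder (n := n) (by omega)) (ArtinB.nu_gen_one (by omega))
  refine ⟨(transvectionZPowHom _ _ _).range, ?_, ⟨(MonoidHom.ofInjective hinj).symm⟩⟩
  ext φ
  constructor
  · rintro ⟨k, rfl⟩
    exact isTransvection_transvectionZPowHom _ _ _ k
  · exact ArtinB.exists_transvectionZPowHom_eq hn
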